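/- arXiv:1707.09040 — 2 statements merged into one kernel-verified Lean document; each statement's English description precedes it below -/
import Mathlib

section
/- Let G = (V, E) be a finite directed graph, Eᵢ ⊆ E, Gᵢ = (V, E ∪ Rᵢ) its projection (Rᵢ the reverses of edges of E \ Eᵢ), and Ēᵢ the set of edges of E whose endpoints lie in distinct strongly connected components of Gᵢ. Then two vertices lie in the same strongly connected component of Gᵢ if and only if they lie in the same weakly connected component of the graph (V, E \ Ēᵢ). -/
/-- Two vertices lie in the same strongly connected component: mutual reachability. -/
def SameSCC {V : Type*} (E : V → V → Prop) (u v : V) : Prop :=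
  Relation.ReflTransGen E u v ∧ Relation.ReflTransGen E v u

/-- The projection of `G = (V, E)` along a direction: keep all edges of `E` and add
the reverses `Rᵢ` of all edges not in the distinguished subset `Eᵢ`. -/
def Projection {V : Type*} (E Ei : V → V → Prop) (u v : V) : Prop :=
  E u v ∨ (E v u ∧ ¬ Ei v u)

/-- `Ēᵢ`: the edges of `E` whose endpoints lie in distinct strongly connected
components of the projection `Gᵢ`. -/
def Ebar {V : Type*} (E Ei : V → V → Prop) (u v : V) : Prop :=
  E u v ∧ ¬ SameSCC (Projection E Ei) u v

/-- Two vertices lie in the same weakly connected component of a directed graph: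
they are joined by a path whose edges may be traversed in either direction. -/
def SameWCC {V : Type*} (E : V → V → Prop) (u v : V) : Prop :=
  Relation.ReflTransGen (fun a b => E a b ∨ E b a) u v

/-- Two vertices lie in the same strongly connected component of the projection `Gᵢ`
if and only if they lie in the same weakly connected component of `(V, E \ Ēᵢ)`. -/
theorem scc_projection_iff_wcc_removal {V : Type*} [Fintype V]
    (E Ei : V → V → Prop) (hsub : ∀ u v, Ei u v → E u v) (u v : V) :
    SameSCC (Projection E Ei) u v ↔
      SameWCC (fun a b => E a b ∧ ¬ Ebar E Ei a b) u v := by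
  set P := Projection E Ei with hP
  constructor
  · rintro ⟨huv, hvu⟩
    revert hvu
    induction huv with
    | refl => intro _; exact Relation.ReflTransGen.refl
    | tail hab hbc ih =>
      intro hcu
      rename_i b c
      have hbu : Relation.ReflTransGen P b u := Relation.ReflTransGen.head hbc hcu
      have hsbc : SameSCC P b c := ⟨Relation.ReflTransGen.single hbc, hcu.trans hab⟩
      refine (ih hbu).tail ?_
      rcases hbc with hE | ⟨hE, _⟩
      · exact Or.inl ⟨hE, fun h => h.2 hsbc⟩
      · exact Or.inr ⟨hE, fun h => h.2 ⟨hsbc.2, hsbc.1⟩⟩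
  · intro h
    induction h with
    | refl => exact ⟨Relation.ReflTransGen.refl, Relation.ReflTransGen.refl⟩
    | tail hub hbc ih =>
      rename_i b c
      have hsbc : SameSCC P b c := by
        rcases hbc with ⟨hE, hnb⟩ | ⟨hE, hnb⟩
        · exact not_not.mp (fun hn => hnb ⟨hE, hn⟩)
        · have := not_not.mp (fun hn => hnb ⟨hE, hn⟩)
          exact ⟨this.2, this.1⟩
      exact ⟨ih.1.trans hsbc.1, hsbc.2.trans ih.2⟩
end

section
/- Let G = (V, E) be a finite directed graph, Eᵢ ⊆ E, Gᵢ = (V, E ∪ Rᵢ) its projection, and Ēᵢ the set of edges with endpoints in distinct strongly connected components of Gᵢ. Then the component connectivity graph implied by removing Ēᵢ — the graph whose vertices are the weakly connected components of (V, E \ Ēᵢ), with an edge (C, D) for C ≠ D whenever some edge of Ēᵢ goes from C to D — is a directed acyclic graph. -/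
/-- `Ēᵢ`: the edges of `E` whose endpoints lie in distinct strongly connected
components of the projection `Gᵢ`. -/
def EbarOf {V : Type*} (E Ei : V → V → Prop) (u v : V) : Prop :=
  E u v ∧ ¬ SameSCC (Projection E Ei) u v

/-- The setoid of weak connectivity for an edge relation `F`: its classes are the
weakly connected components of `(V, F)`. -/
def wccSetoid {V : Type*} (F : V → V → Prop) : Setoid V where
  r := Relation.ReflTransGen (fun a b => F a b ∨ F b a)
  iseqv := ⟨fun _ => .refl,
    fun h => (@Relation.ReflTransGen.stdSymm _ _ ⟨fun _ _ hab => hab.symm⟩).symm _ _ h,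
    fun h1 h2 => h1.trans h2⟩

/-- The component connectivity graph (CCG) implied by removing `Ē ⊆ E`: vertices are
the weakly connected components of `(V, E \ Ē)`, with an edge `(C, D)`, `C ≠ D`,
whenever some edge of `Ē` goes from a vertex of `C` to a vertex of `D`. -/
def CCGEdge {V : Type*} (E Ebar : V → V → Prop)
    (C D : Quotient (wccSetoid (fun a b => E a b ∧ ¬ Ebar a b))) : Prop :=
  C ≠ D ∧ ∃ u v : V, Quotient.mk _ u = C ∧ Quotient.mk _ v = D ∧ Ebar u v

namespace SameSCC

variable {V : Type*} {R : V → V → Prop} {u v w : V}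

theorem refl (u : V) : SameSCC R u u := ⟨.refl, .refl⟩

theorem symm (h : SameSCC R u v) : SameSCC R v u := ⟨h.2, h.1⟩

theorem trans (huv : SameSCC R u v) (hvw : SameSCC R v w) : SameSCC R u w :=
  ⟨huv.1.trans hvw.1, hvw.2.trans huv.2⟩

theorem of_wccSetoid {F : V → V → Prop} (hF : ∀ a b, F a b → SameSCC R a b)
    (h : (wccSetoid F).r u v) : SameSCC R u v := by
  induction h with
  | refl => exact refl u
  | tail _ hstep ih =>
    rcases hstep with hab | hba
    · exact ih.trans (hF _ _ hab)
    · exact ih.trans (hF _ _ hba).symm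

end SameSCC

section CCG

variable {V : Type*} {E Ebar R : V → V → Prop}

theorem reflTransGen_of_reflTransGen_ccgEdge (hEbar : ∀ a b, Ebar a b → R a b)
    (hkept : ∀ a b, E a b → ¬ Ebar a b → SameSCC R a b)
    {C D : Quotient (wccSetoid (fun a b => E a b ∧ ¬ Ebar a b))}
    (h : Relation.ReflTransGen (CCGEdge E Ebar) C D) {u v : V}
    (hu : Quotient.mk _ u = C) (hv : Quotient.mk _ v = D) :
    Relation.ReflTransGen R u v := by
  have reach_of_mk_eq {a b : V}
      (hab : Quotient.mk (wccSetoid (fun a b => E a b ∧ ¬ Ebar a b)) a = Quotient.mk _ b) :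
      Relation.ReflTransGen R a b :=
    (SameSCC.of_wccSetoid (fun a b h => hkept a b h.1 h.2) (Quotient.exact hab)).1
  induction h generalizing v with
  | refl => exact reach_of_mk_eq (hu.trans hv.symm)
  | tail _ hstep ih =>
    obtain ⟨-, a, b, ha, hb, hab⟩ := hstep
    exact ((ih ha).tail (hEbar a b hab)).trans (reach_of_mk_eq (hb.trans hv.symm))

theorem ccgEdge_acyclic (hEbar : ∀ a b, Ebar a b → R a b ∧ ¬ SameSCC R a b)
    (hkept : ∀ a b, E a b → ¬ Ebar a b → SameSCC R a b) :
    ¬ ∃ C, Relation.TransGen (CCGEdge E Ebar) C C := by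
  rintro ⟨C, hcycle⟩
  obtain ⟨D, ⟨-, u, v, hu, hv, huv⟩, hDC⟩ := Relation.TransGen.head'_iff.mp hcycle
  have hvu : Relation.ReflTransGen R v u :=
    reflTransGen_of_reflTransGen_ccgEdge (fun a b h => (hEbar a b h).1) hkept hDC hv hu
  exact (hEbar u v huv).2 ⟨.single (hEbar u v huv).1, hvu⟩

end CCG

theorem ccg_of_ebar_acyclic_general {V : Type*}
    (E Ei : V → V → Prop) :
    ¬ ∃ C, Relation.TransGen (CCGEdge E (EbarOf E Ei)) C C :=
  ccgEdge_acyclic (fun _ _ h => ⟨Or.inl h.1, h.2⟩) fun _ _ hE hnotEbar => by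
    by_contra hcross
    exact hnotEbar ⟨hE, hcross⟩

/-- The component connectivity graph implied by removing `Ēᵢ` (the edges with
endpoints in distinct strongly connected components of the projection `Gᵢ`)
is a directed acyclic graph. -/
theorem ccg_of_ebar_acyclic {V : Type*} [Fintype V]
    (E Ei : V → V → Prop) (hsub : ∀ u v, Ei u v → E u v) :
    ¬ ∃ C, Relation.TransGen (CCGEdge E (EbarOf E Ei)) C C :=
  ccg_of_ebar_acyclic_general E Ei
end
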